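/- For every natural number N ≥ 3, the standard Aubin–Talenti bubble attains the sharp Sobolev constant: ∫_{ℝ^N} |∇u₀|² dx = S_N · ( ∫_{ℝ^N} |u₀|^{2*} dx )^{(N−2)/N}, where ∇u₀(x) = −(N−2) x (1 + |x|²)^{−N/2}. -/

import Mathlib

open MeasureTheory Real Set

/-- The standard Aubin–Talenti bubble `u₀(x) = (1+|x|²)^{−(N−2)/2}`. -/
noncomputable def bubble0 (N : ℕ) (x : EuclideanSpace ℝ (Fin N)) : ℝ :=
  (1 + ‖x‖ ^ 2) ^ (-(((N : ℝ) - 2) / 2))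

/-- The sharp Sobolev constant `S_N = N(N−2)π (Γ(N/2)/Γ(N))^{2/N}`. -/
noncomputable def sobolevS (N : ℕ) : ℝ :=
  N * ((N : ℝ) - 2) * π * (Real.Gamma ((N : ℝ) / 2) / Real.Gamma N) ^ ((2 : ℝ) / N)

lemma realBeta {u v : ℝ} (hu : 0 < u) (hv : 0 < v) :
    ∫ x in (0:ℝ)..1, x ^ (u - 1) * (1 - x) ^ (v - 1) =
      Real.Gamma u * Real.Gamma v / Real.Gamma (u + v) := by
  have key : Complex.Gamma u * Complex.Gamma v =
      Complex.Gamma ((u:ℂ) + v) * Complex.betaIntegral u v :=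
    Complex.Gamma_mul_Gamma_eq_betaIntegral (by simpa using hu) (by simpa using hv)
  have hbeta : Complex.betaIntegral (u:ℂ) (v:ℂ) =
      ((∫ x in (0:ℝ)..1, x ^ (u - 1) * (1 - x) ^ (v - 1) : ℝ) : ℂ) := by
    rw [Complex.betaIntegral, ← intervalIntegral.integral_ofReal]
    refine intervalIntegral.integral_congr fun x hx => ?_
    rw [uIcc_of_le zero_le_one] at hx
    have hx0 : (0:ℝ) ≤ x := hx.1
    have hx1 : (0:ℝ) ≤ 1 - x := by linarith [hx.2]
    rw [Complex.ofReal_mul, Complex.ofReal_cpow hx0, Complex.ofReal_cpow hx1]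
    push_cast
    ring
  rw [hbeta, ← Complex.ofReal_add, Complex.Gamma_ofReal, Complex.Gamma_ofReal,
    Complex.Gamma_ofReal, ← Complex.ofReal_mul, ← Complex.ofReal_mul] at key
  have key' : Real.Gamma u * Real.Gamma v =
      Real.Gamma (u + v) * ∫ x in (0:ℝ)..1, x ^ (u - 1) * (1 - x) ^ (v - 1) :=
    Complex.ofReal_injective key
  have hG : Real.Gamma (u + v) ≠ 0 := (Real.Gamma_pos_of_pos (by linarith)).ne'
  field_simp [key']
  rw [key']; ring

lemma ioiBeta {a b : ℝ} (ha : 0 < a) (hb : 0 < b) :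
    ∫ t in Ioi (0:ℝ), t ^ (a - 1) * (1 + t) ^ (-(a + b)) =
      Real.Gamma a * Real.Gamma b / Real.Gamma (a + b) := by
  set g : ℝ → ℝ := fun t => t ^ (a - 1) * (1 + t) ^ (-(a + b)) with hg
  have himg : (fun x : ℝ => x / (1 - x)) '' Ioo 0 1 = Ioi (0:ℝ) := by
    ext t
    constructor
    · rintro ⟨x, ⟨hx0, hx1⟩, rfl⟩
      exact div_pos hx0 (by linarith)
    · intro ht
      have ht' : (0:ℝ) < t := ht
      refine ⟨t / (1 + t), ⟨div_pos ht' (by linarith), ?_⟩, ?_⟩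
      · rw [div_lt_one (by linarith)]; linarith
      · field_simp; ring
  have hderiv : ∀ x ∈ Ioo (0:ℝ) 1,
      HasDerivWithinAt (fun x : ℝ => x / (1 - x)) (((1 - x) ^ 2)⁻¹) (Ioo 0 1) x := by
    intro x hx
    have h1x : (1:ℝ) - x ≠ 0 := by have := hx.2; intro h; simp only [sub_eq_zero] at h; linarith
    have := (hasDerivAt_id x).div ((hasDerivAt_id x).const_sub 1) h1x
    refine this.hasDerivWithinAt.congr_deriv ?_
    simp only [id]; field_simp; ring
  have hinj : InjOn (fun x : ℝ => x / (1 - x)) (Ioo 0 1) := by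
    intro x hx y hy h
    have h1x : (1:ℝ) - x ≠ 0 := by have := hx.2; intro h; simp only [sub_eq_zero] at h; linarith
    have h1y : (1:ℝ) - y ≠ 0 := by have := hy.2; intro h; simp only [sub_eq_zero] at h; linarith
    field_simp at h
    linarith
  have key := integral_image_eq_integral_abs_deriv_smul measurableSet_Ioo hderiv hinj g
  rw [himg] at key
  rw [key]
  have heq : ∀ x ∈ Ioo (0:ℝ) 1,
      |((1 - x) ^ 2)⁻¹| • g (x / (1 - x)) = x ^ (a - 1) * (1 - x) ^ (b - 1) := by
    intro x hx
    have hx0 : (0:ℝ) < x := hx.1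
    have h1x : (0:ℝ) < 1 - x := by have := hx.2; linarith
    have h1 : (1:ℝ) + x / (1 - x) = (1 - x)⁻¹ := by field_simp; ring
    have e1 : ((1 - x) ^ 2)⁻¹ = (1 - x) ^ (-2 : ℝ) := by
      rw [← Real.rpow_natCast (1 - x) 2, ← Real.rpow_neg h1x.le]; norm_num
    have e2 : (x / (1 - x)) ^ (a - 1) = x ^ (a - 1) * (1 - x) ^ (-(a - 1)) := by
      rw [Real.div_rpow hx0.le h1x.le, Real.rpow_neg h1x.le, div_eq_mul_inv]
    have e3 : ((1 - x)⁻¹) ^ (-(a + b)) = (1 - x) ^ (a + b) := by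
      rw [Real.inv_rpow h1x.le, ← Real.rpow_neg h1x.le, neg_neg]
    have e4 : (1 - x) ^ (-2 : ℝ) * ((1 - x) ^ (-(a - 1)) * (1 - x) ^ (a + b)) =
        (1 - x) ^ (b - 1) := by
      rw [← Real.rpow_add h1x, ← Real.rpow_add h1x]; congr 1; ring
    rw [hg, smul_eq_mul, abs_of_pos (by positivity)]
    dsimp only
    rw [h1, e1, e2, e3]
    linear_combination x ^ (a - 1) * e4
  rw [setIntegral_congr_fun measurableSet_Ioo heq, ← integral_Ioc_eq_integral_Ioo,
    ← intervalIntegral.integral_of_le zero_le_one]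
  exact realBeta ha hb

lemma ioiBetaSq {a b : ℝ} (ha : 0 < a) (hb : 0 < b) :
    ∫ y in Ioi (0:ℝ), y ^ (2 * a - 1) * (1 + y ^ 2) ^ (-(a + b)) =
      Real.Gamma a * Real.Gamma b / (2 * Real.Gamma (a + b)) := by
  set g : ℝ → ℝ := fun t => t ^ (a - 1) * (1 + t) ^ (-(a + b)) with hg
  have key := MeasureTheory.integral_comp_rpow_Ioi_of_pos (g := g) (p := 2) two_pos
  have heq : ∀ x ∈ Ioi (0:ℝ),
      (2 * x ^ ((2:ℝ) - 1)) • g (x ^ (2:ℝ)) =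
        2 * (x ^ (2 * a - 1) * (1 + x ^ 2) ^ (-(a + b))) := by
    intro x hx
    have hx0 : (0:ℝ) < x := hx
    have h2 : x ^ ((2:ℝ)) = x ^ (2:ℕ) := Real.rpow_natCast x 2
    have h3 : (x ^ (2:ℕ)) ^ (a - 1) = x ^ (2 * (a - 1)) := by
      rw [← Real.rpow_natCast x 2, ← Real.rpow_mul hx0.le]; norm_num
    rw [smul_eq_mul, hg]
    dsimp only
    rw [h2, h3]
    have h4 : x ^ ((2:ℝ) - 1) = x := by norm_num
    rw [h4]
    have h5 : x ^ (2 * (a - 1)) * x = x ^ (2 * a - 1) := by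
      nth_rewrite 2 [← Real.rpow_one x]
      rw [← Real.rpow_add hx0]; congr 1; ring
    linear_combination 2 * (1 + x ^ 2) ^ (-(a + b)) * h5
  rw [setIntegral_congr_fun measurableSet_Ioi heq, integral_const_mul] at key
  rw [hg] at key
  have := ioiBeta ha hb
  rw [this] at key
  field_simp at key ⊢
  linarith

lemma radialInt (N : ℕ) (hN : 3 ≤ N) (f : ℝ → ℝ) :
    ∫ x : EuclideanSpace ℝ (Fin N), f ‖x‖ =
      N * (Real.sqrt π ^ N / Real.Gamma (N / 2 + 1)) *
        ∫ y in Ioi (0:ℝ), y ^ (N - 1 : ℕ) * f y := by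
  haveI : Nonempty (Fin N) := ⟨⟨0, by omega⟩⟩
  have key := MeasureTheory.integral_fun_norm_addHaar
    (volume : Measure (EuclideanSpace ℝ (Fin N))) f
  rw [key]
  have hdim : Module.finrank ℝ (EuclideanSpace ℝ (Fin N)) = N := finrank_euclideanSpace_fin
  rw [hdim]
  have hvol : (volume (Metric.ball (0 : EuclideanSpace ℝ (Fin N)) 1)).toReal =
      Real.sqrt π ^ N / Real.Gamma (N / 2 + 1) := by
    rw [EuclideanSpace.volume_ball]
    simp [Fintype.card_fin, ENNReal.toReal_ofReal
      (by positivity : (0:ℝ) ≤ Real.sqrt π ^ N / Real.Gamma ((N:ℝ) / 2 + 1))]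
  rw [measureReal_def, hvol, nsmul_eq_mul, smul_eq_mul, ← mul_assoc]
  simp only [smul_eq_mul]

/-- The standard bubble attains the sharp Sobolev constant:
`∇u₀(x) = −(N−2)(1+|x|²)^{−N/2} x` and
`∫ |∇u₀|² = S_N (∫ |u₀|^{2*})^{(N−2)/N}`. -/
theorem stmt_14 (N : ℕ) (hN : 3 ≤ N) :
    (∀ x : EuclideanSpace ℝ (Fin N),
        gradient (bubble0 N) x =
          (-((N : ℝ) - 2) * (1 + ‖x‖ ^ 2) ^ (-(N : ℝ) / 2)) • x) ∧
      (∫ x, ‖gradient (bubble0 N) x‖ ^ 2) =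
        sobolevS N *
          (∫ x, |bubble0 N x| ^ (2 * (N : ℝ) / ((N : ℝ) - 2))) ^
            (((N : ℝ) - 2) / N) := by
  have hN2 : (3:ℝ) ≤ (N:ℝ) := by exact_mod_cast hN
  set p : ℝ := -(((N : ℝ) - 2) / 2) with hp
  -- the gradient formula
  have hgrad : ∀ x : EuclideanSpace ℝ (Fin N),
      HasGradientAt (bubble0 N)
        ((-((N : ℝ) - 2) * (1 + ‖x‖ ^ 2) ^ (-(N : ℝ) / 2)) • x) x := by
    intro x
    have ht : (0:ℝ) < 1 + ‖x‖ ^ 2 := by positivity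
    have h1 : HasFDerivAt (fun y : EuclideanSpace ℝ (Fin N) => 1 + ‖y‖ ^ 2)
        (2 • (innerSL ℝ x)) x :=
      ((hasStrictFDerivAt_norm_sq x).hasFDerivAt).const_add 1
    have h2 : HasDerivAt (fun s : ℝ => s ^ p) (p * (1 + ‖x‖ ^ 2) ^ (p - 1)) (1 + ‖x‖ ^ 2) :=
      Real.hasDerivAt_rpow_const (Or.inl ht.ne')
    have h3 := h2.comp_hasFDerivAt x h1
    rw [hasGradientAt_iff_hasFDerivAt]
    refine h3.congr_fderiv ?_
    ext y
    simp only [InnerProductSpace.toDual_apply_apply, ContinuousLinearMap.smul_apply,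
      innerSL_apply_apply, smul_eq_mul, real_inner_smul_left]
    have hexp : (1 + ‖x‖ ^ 2) ^ (p - 1) = (1 + ‖x‖ ^ 2) ^ (-(N:ℝ) / 2) := by
      congr 1; rw [hp]; ring
    rw [hexp]
    ring
  have hgrad' : ∀ x : EuclideanSpace ℝ (Fin N),
      gradient (bubble0 N) x =
        (-((N : ℝ) - 2) * (1 + ‖x‖ ^ 2) ^ (-(N : ℝ) / 2)) • x :=
    fun x => (hgrad x).gradient
  refine ⟨hgrad', ?_⟩
  -- constants
  have hπ : (0:ℝ) < π := pi_pos
  have hGhalf : (0:ℝ) < Real.Gamma ((N:ℝ) / 2) := Real.Gamma_pos_of_pos (by linarith)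
  have hGN : (0:ℝ) < Real.Gamma (N:ℝ) := Real.Gamma_pos_of_pos (by linarith)
  have hGm : (0:ℝ) < Real.Gamma ((N:ℝ) / 2 - 1) := Real.Gamma_pos_of_pos (by linarith)
  have hGp : (0:ℝ) < Real.Gamma ((N:ℝ) / 2 + 1) := Real.Gamma_pos_of_pos (by linarith)
  -- the two integrals
  have hI1 : (∫ x : EuclideanSpace ℝ (Fin N), ‖gradient (bubble0 N) x‖ ^ 2) =
      (N:ℝ) * (Real.sqrt π ^ N / Real.Gamma ((N:ℝ) / 2 + 1)) *
        (((N:ℝ) - 2) ^ 2 *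
          (Real.Gamma ((N:ℝ) / 2 + 1) * Real.Gamma ((N:ℝ) / 2 - 1) /
            (2 * Real.Gamma (N:ℝ)))) := by
    have hfun : (fun x : EuclideanSpace ℝ (Fin N) => ‖gradient (bubble0 N) x‖ ^ 2) =
        fun x => (fun y : ℝ => ((N:ℝ) - 2) ^ 2 * (y ^ 2 * (1 + y ^ 2) ^ (-(N:ℝ)))) ‖x‖ := by
      funext x
      have ht : (0:ℝ) < 1 + ‖x‖ ^ 2 := by positivity
      have h2 : ((1 + ‖x‖ ^ 2) ^ (-(N:ℝ) / 2)) ^ (2:ℕ) = (1 + ‖x‖ ^ 2) ^ (-(N:ℝ)) := by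
        rw [← Real.rpow_natCast ((1 + ‖x‖ ^ 2) ^ (-(N:ℝ) / 2)) 2, ← Real.rpow_mul ht.le]
        norm_num
      rw [hgrad' x, norm_smul, Real.norm_eq_abs, mul_pow, sq_abs, mul_pow, h2]
      ring
    rw [hfun, radialInt N hN (fun y : ℝ => ((N:ℝ) - 2) ^ 2 * (y ^ 2 * (1 + y ^ 2) ^ (-(N:ℝ))))]
    congr 1
    have heq : ∀ y ∈ Ioi (0:ℝ),
        (y:ℝ) ^ (N - 1 : ℕ) * (((N:ℝ) - 2) ^ 2 * (y ^ 2 * (1 + y ^ 2) ^ (-(N:ℝ)))) =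
          ((N:ℝ) - 2) ^ 2 *
            (y ^ (2 * ((N:ℝ) / 2 + 1) - 1) *
              (1 + y ^ 2) ^ (-(((N:ℝ) / 2 + 1) + ((N:ℝ) / 2 - 1)))) := by
      intro y hy
      have hy0 : (0:ℝ) < y := hy
      have e1 : (y:ℝ) ^ (N - 1 : ℕ) * y ^ (2:ℕ) = y ^ (2 * ((N:ℝ) / 2 + 1) - 1) := by
        rw [← pow_add, ← Real.rpow_natCast y (N - 1 + 2)]
        congr 1
        push_cast [Nat.cast_sub (by omega : 1 ≤ N)]
        ring
      have e2 : (1 + y ^ 2 : ℝ) ^ (-(N:ℝ)) =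
          (1 + y ^ 2) ^ (-(((N:ℝ) / 2 + 1) + ((N:ℝ) / 2 - 1))) := by
        congr 1; ring
      rw [e2]
      linear_combination ((N:ℝ) - 2) ^ 2 * (1 + y ^ 2) ^ (-(((N:ℝ) / 2 + 1) + ((N:ℝ) / 2 - 1))) * e1
    rw [setIntegral_congr_fun measurableSet_Ioi heq, integral_const_mul,
      ioiBetaSq (by linarith) (by linarith)]
    congr 2
    ring_nf
  have hI0 : (∫ x : EuclideanSpace ℝ (Fin N),
        |bubble0 N x| ^ (2 * (N : ℝ) / ((N : ℝ) - 2))) =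
      (N:ℝ) * (Real.sqrt π ^ N / Real.Gamma ((N:ℝ) / 2 + 1)) *
        (Real.Gamma ((N:ℝ) / 2) * Real.Gamma ((N:ℝ) / 2) / (2 * Real.Gamma (N:ℝ))) := by
    have hfun : (fun x : EuclideanSpace ℝ (Fin N) =>
          |bubble0 N x| ^ (2 * (N : ℝ) / ((N : ℝ) - 2))) =
        fun x => (fun y : ℝ => (1 + y ^ 2) ^ (-(N:ℝ))) ‖x‖ := by
      funext x
      have ht : (0:ℝ) < 1 + ‖x‖ ^ 2 := by positivity
      have hne : (N:ℝ) - 2 ≠ 0 := by intro h; nlinarith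
      rw [bubble0, abs_of_pos (Real.rpow_pos_of_pos ht _), ← Real.rpow_mul ht.le]
      congr 1
      field_simp
    rw [hfun, radialInt N hN (fun y : ℝ => (1 + y ^ 2) ^ (-(N:ℝ)))]
    congr 1
    have heq : ∀ y ∈ Ioi (0:ℝ),
        (y:ℝ) ^ (N - 1 : ℕ) * (1 + y ^ 2) ^ (-(N:ℝ)) =
          y ^ (2 * ((N:ℝ) / 2) - 1) * (1 + y ^ 2) ^ (-(((N:ℝ) / 2) + ((N:ℝ) / 2))) := by
      intro y hy
      have hy0 : (0:ℝ) < y := hy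
      have e1 : (y:ℝ) ^ (N - 1 : ℕ) = y ^ (2 * ((N:ℝ) / 2) - 1) := by
        rw [← Real.rpow_natCast y (N - 1)]
        congr 1
        push_cast [Nat.cast_sub (by omega : 1 ≤ N)]
        ring
      have e2 : (1 + y ^ 2 : ℝ) ^ (-(N:ℝ)) =
          (1 + y ^ 2) ^ (-(((N:ℝ) / 2) + ((N:ℝ) / 2))) := by
        congr 1; ring
      rw [e1, e2]
    rw [setIntegral_congr_fun measurableSet_Ioi heq,
      ioiBetaSq (by linarith) (by linarith),
      show (N:ℝ) / 2 + (N:ℝ) / 2 = (N:ℝ) from by ring]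
  rw [hI1, hI0]
  -- now pure computation with Gamma and π
  have hsqrt : Real.sqrt π ^ N = π ^ ((N:ℝ) / 2) := by
    rw [Real.sqrt_eq_rpow, ← Real.rpow_natCast (π ^ ((1:ℝ)/2)) N, ← Real.rpow_mul hπ.le]
    congr 1
    ring
  have hGam1 : Real.Gamma ((N:ℝ) / 2 + 1) = ((N:ℝ) / 2) * Real.Gamma ((N:ℝ) / 2) :=
    Real.Gamma_add_one (by positivity)
  have hGam2 : Real.Gamma ((N:ℝ) / 2) = ((N:ℝ) / 2 - 1) * Real.Gamma ((N:ℝ) / 2 - 1) := by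
    have h := Real.Gamma_add_one (s := (N:ℝ) / 2 - 1) (by intro h; nlinarith)
    rw [show ((N:ℝ) / 2 - 1) + 1 = (N:ℝ) / 2 from by ring] at h
    exact h
  set P : ℝ := π ^ ((N:ℝ) / 2) * Real.Gamma ((N:ℝ) / 2) / Real.Gamma (N:ℝ) with hP
  have hPpos : 0 < P := by rw [hP]; positivity
  have hL : (N:ℝ) * (Real.sqrt π ^ N / Real.Gamma ((N:ℝ) / 2 + 1)) *
        (((N:ℝ) - 2) ^ 2 *
          (Real.Gamma ((N:ℝ) / 2 + 1) * Real.Gamma ((N:ℝ) / 2 - 1) /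
            (2 * Real.Gamma (N:ℝ)))) = (N:ℝ) * ((N:ℝ) - 2) * P := by
    rw [hsqrt, hP]
    field_simp
    rw [hGam2]
    ring_nf
  have hR : (N:ℝ) * (Real.sqrt π ^ N / Real.Gamma ((N:ℝ) / 2 + 1)) *
        (Real.Gamma ((N:ℝ) / 2) * Real.Gamma ((N:ℝ) / 2) / (2 * Real.Gamma (N:ℝ))) = P := by
    rw [hsqrt, hP, hGam1]
    field_simp
  rw [hL, hR]
  -- final: N(N-2) P = sobolevS N * P ^ ((N-2)/N)
  rw [sobolevS, hP]
  set G : ℝ := Real.Gamma ((N:ℝ) / 2) / Real.Gamma (N:ℝ) with hGdef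
  have hGpos : 0 < G := by rw [hGdef]; positivity
  have hPG : π ^ ((N:ℝ) / 2) * Real.Gamma ((N:ℝ) / 2) / Real.Gamma (N:ℝ) =
      π ^ ((N:ℝ) / 2) * G := by rw [hGdef]; ring
  rw [hPG]
  have hexp : (π ^ ((N:ℝ) / 2) * G) ^ (((N:ℝ) - 2) / N) =
      π ^ (((N:ℝ) - 2) / 2) * G ^ (((N:ℝ) - 2) / N) := by
    rw [Real.mul_rpow (by positivity) hGpos.le, ← Real.rpow_mul hπ.le]
    congr 2
    field_simp
  rw [hexp]
  have hπcomb : π * π ^ (((N:ℝ) - 2) / 2) = π ^ ((N:ℝ) / 2) := by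
    nth_rewrite 1 [← Real.rpow_one π]
    rw [← Real.rpow_add hπ]
    congr 1
    ring
  have hGcomb : G ^ ((2:ℝ) / N) * G ^ (((N:ℝ) - 2) / N) = G := by
    rw [← Real.rpow_add hGpos]
    have : (2:ℝ) / N + ((N:ℝ) - 2) / N = 1 := by
      field_simp
      ring
    rw [this, Real.rpow_one]
  calc (N:ℝ) * ((N:ℝ) - 2) * (π ^ ((N:ℝ) / 2) * G)
      = (N:ℝ) * ((N:ℝ) - 2) * ((π * π ^ (((N:ℝ) - 2) / 2)) *
          (G ^ ((2:ℝ) / N) * G ^ (((N:ℝ) - 2) / N))) := by rw [hπcomb, hGcomb]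
    _ = (N:ℝ) * ((N:ℝ) - 2) * π * G ^ ((2:ℝ) / N) *
          (π ^ (((N:ℝ) - 2) / 2) * G ^ (((N:ℝ) - 2) / N)) := by ring
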